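/- Let F be a field and K a field extension of F that is finite-dimensional as an F-vector space, with m = dim_F K. Then for any tensor T : [n]^d → F (d ≥ 1), viewing T also as a tensor with entries in K, we have rank_F(T) ≤ m^{d−1} · rank_K(T). -/

import Mathlib

/-!
Take a minimal decomposition `∑ₗ ∏ⱼ vₗⱼ` of `T` over `K`, with `d = k + 1` factors, and an
`F`-linear retraction `φ : K → F` of the inclusion. Expanding the last `k` factors in an
`F`-basis `b` of `K` writes `∏ⱼ vₗⱼ` as a sum over the `m ^ k` multi-indices `t` of
`F`-multiples of `vₗ₀ · ∏ⱼ b_{t j}`; applying `φ` recovers `T` as a sum of `r · m ^ k` simple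
tensors over `F`, the first factor of each being `φ (vₗ₀ · ∏ⱼ b_{t j})`.
-/
/-- The tensor rank of an order-`d` cube tensor `T : I^d → F`:
the least `r` such that `T` is the sum of `r` simple tensors. -/
noncomputable def tensorRank (F : Type*) [Field F] {d : ℕ} {I : Type*}
    (T : (Fin d → I) → F) : ℕ :=
  sInf {r : ℕ | ∃ v : Fin r → Fin d → I → F, ∀ i, T i = ∑ l, ∏ j, v l j (i j)}

open Module

section TensorRank

variable {F : Type*} [Field F] {d : ℕ} {I : Type*}

lemma exists_fin_decomposition_of_fintype (T : (Fin d → I) → F) (α : Type*) [Fintype α]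
    (v : α → Fin d → I → F) (h : ∀ i, T i = ∑ l, ∏ j, v l j (i j)) :
    ∃ v : Fin (Fintype.card α) → Fin d → I → F, ∀ i, T i = ∑ l, ∏ j, v l j (i j) :=
  ⟨fun l => v ((Fintype.equivFin α).symm l), fun i => by
    rw [h i, ← Equiv.sum_comp (Fintype.equivFin α).symm]⟩

lemma tensorRank_le_card (T : (Fin d → I) → F) (α : Type*) [Fintype α]
    (v : α → Fin d → I → F) (h : ∀ i, T i = ∑ l, ∏ j, v l j (i j)) :
    tensorRank F T ≤ Fintype.card α :=
  Nat.sInf_le (exists_fin_decomposition_of_fintype T α v h)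

lemma exists_decomposition_of_fintype [Fintype I] [DecidableEq I] {k : ℕ}
    (T : (Fin (k + 1) → I) → F) :
    ∃ v : (Fin (k + 1) → I) → Fin (k + 1) → I → F, ∀ i, T i = ∑ l, ∏ j, v l j (i j) := by
  refine ⟨fun l j x => if x = l j then (if j = 0 then T l else 1) else 0, fun i => ?_⟩
  simp_rw [Finset.prod_ite_zero, Finset.mem_univ, true_implies, ← funext_iff,
    Finset.prod_ite_eq', Finset.mem_univ, if_true, Finset.sum_ite_eq, Finset.mem_univ, if_true]

lemma exists_decomposition_tensorRank [Finite I] {k : ℕ} (T : (Fin (k + 1) → I) → F) :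
    ∃ v : Fin (tensorRank F T) → Fin (k + 1) → I → F, ∀ i, T i = ∑ l, ∏ j, v l j (i j) := by
  classical
  have := Fintype.ofFinite I
  obtain ⟨v, hv⟩ := exists_decomposition_of_fintype T
  exact Nat.sInf_mem
    (s := {r | ∃ v : Fin r → Fin (k + 1) → I → F, ∀ i, T i = ∑ l, ∏ j, v l j (i j)})
    ⟨_, exists_fin_decomposition_of_fintype T _ v hv⟩

end TensorRank

lemma Module.Basis.prod_eq_sum_prod_repr_smul {F A ι κ : Type*} [CommSemiring F]
    [CommSemiring A] [Algebra F A] [Fintype ι] [Fintype κ] [DecidableEq κ] (b : Basis ι F A)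
    (x : κ → A) :
    ∏ j, x j = ∑ t : κ → ι, (∏ j, b.repr (x j) (t j)) • ∏ j, b (t j) := by
  conv_lhs => rw [← funext fun j => b.sum_repr (x j)]
  rw [Fintype.prod_sum]
  refine Fintype.sum_congr _ _ fun t => ?_
  simp_rw [Algebra.smul_def, Finset.prod_mul_distrib, map_prod]

lemma exists_linearMap_comp_algebraMap_eq_id (F K : Type*) [Field F] [Field K]
    [Algebra F K] : ∃ φ : K →ₗ[F] F, ∀ x, φ (algebraMap F K x) = x := by
  obtain ⟨φ, hφ⟩ := (Algebra.linearMap F K).exists_leftInverse_of_injective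
    (LinearMap.ker_eq_bot.mpr (algebraMap F K).injective)
  exact ⟨φ, fun x => LinearMap.congr_fun hφ x⟩

lemma exists_decomposition_of_algebraMap {F K I ι α : Type*} [CommSemiring F] [CommSemiring K]
    [Algebra F K] [Fintype ι] [Fintype α] {k : ℕ} (b : Basis ι F K) (φ : K →ₗ[F] F)
    (hφ : ∀ x, φ (algebraMap F K x) = x) (T : (Fin (k + 1) → I) → F)
    (v : α → Fin (k + 1) → I → K) (hv : ∀ i, algebraMap F K (T i) = ∑ l, ∏ j, v l j (i j)) :
    ∃ w : α × (Fin k → ι) → Fin (k + 1) → I → F, ∀ i, T i = ∑ p, ∏ j, w p j (i j) := by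
  classical
  refine ⟨fun p => Fin.cons (fun x => φ (v p.1 0 x * ∏ j, b (p.2 j)))
    (fun j x => b.repr (v p.1 j.succ x) (p.2 j)), fun i => ?_⟩
  rw [← hφ (T i), hv i, map_sum, Fintype.sum_prod_type]
  refine Fintype.sum_congr _ _ fun l => ?_
  rw [Fin.prod_univ_succ, b.prod_eq_sum_prod_repr_smul, Finset.mul_sum, map_sum]
  refine Fintype.sum_congr _ _ fun t => ?_
  rw [Fin.prod_univ_succ, mul_smul_comm, map_smul, smul_eq_mul, mul_comm]
  simp only [Fin.cons_zero, Fin.cons_succ]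

/-- Let `K` be a field extension of `F` of finite dimension `m = dim_F K`.  For any
tensor `T : [n]^d → F`, viewing `T` as a tensor over `K` via the inclusion `F ⊆ K`,
we have `rank_F(T) ≤ m^{d-1} · rank_K(T)`. -/
theorem stmt14 (F K : Type*) [Field F] [Field K] [Algebra F K] [FiniteDimensional F K]
    (d n : ℕ) (hd : 1 ≤ d) (T : (Fin d → Fin n) → F) :
    tensorRank F T ≤
      (Module.finrank F K) ^ (d - 1) * tensorRank K (fun i => algebraMap F K (T i)) := by
  obtain ⟨k, rfl⟩ : ∃ k, d = k + 1 := ⟨d - 1, by omega⟩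
  obtain ⟨φ, hφ⟩ := exists_linearMap_comp_algebraMap_eq_id F K
  obtain ⟨v, hv⟩ := exists_decomposition_tensorRank (fun i => algebraMap F K (T i))
  obtain ⟨w, hw⟩ := exists_decomposition_of_algebraMap (Module.finBasis F K) φ hφ T v hv
  simpa [Fintype.card_prod, Fintype.card_fun, mul_comm] using tensorRank_le_card T _ w hw
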